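/- The one-step transition relation of the abstracted ANF CESK machine depends on the continuation only through its top frame (for pops) or not at all (for tail calls and pushes): if (q, κ̂) ↝ (q', κ̂') with stack action g, then for every continuation κ̂₀, the configuration (q, κ̂₀-updated-by-g) transitions analogously. Hence the machine is faithfully represented by a pushdown system over control states q = (e, ρ̂, σ̂) with stack alphabet the frames: (q, κ̂) ↝ (q', κ̂') in the machine iff the corresponding configuration transition holds in the induced pushdown system. -/

import Mathlib

/-- Variables. -/
abbrev Var : Type := ℕ

mutual
/-- A-Normal Form expressions: non-tail calls, tail calls, and returns. -/
inductive Exp : Type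
  | letE : Var → Callq → Exp → Exp
  | callE : Callq → Exp
  | atomE : Atomq → Exp
/-- Applications of an atomic function to an atomic argument. -/
inductive Callq : Type
  | app : Atomq → Atomq → Callq
/-- Atomic expressions: variables and lambda terms. -/
inductive Atomq : Type
  | var : Var → Atomq
  | lam : Var → Exp → Atomq
end

/-- Lambda terms, as (parameter, body). -/
abbrev Lam : Type := Var × Exp

section Abstract

variable (A : Type)

/-- Abstract environments: finite partial maps from variables to abstract addresses. -/
abbrev AEnv : Type := Var → Option A

/-- Abstract closures. -/
abbrev AClo : Type := Lam × AEnv A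

/-- Abstract stores: maps from abstract addresses to sets of abstract closures. -/
abbrev AStore : Type := A → Set (AClo A)

/-- Abstract stack frames. -/
abbrev AFrame : Type := Var × Exp × AEnv A

/-- Abstract continuations. -/
abbrev AKont : Type := List (AFrame A)

/-- Abstract configurations. -/
abbrev AConf : Type := Exp × AEnv A × AStore A × AKont A

end Abstract

variable {A : Type}

/-- Order on abstract environments: agreement on the domain. -/
def envLe (ρ ρ' : AEnv A) : Prop := ∀ v a, ρ v = some a → ρ' v = some a

/-- Order on abstract stores: pointwise inclusion. -/
def storeLe (σ σ' : AStore A) : Prop := ∀ a, σ a ⊆ σ' a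

/-- Order on abstract frames: componentwise. -/
def frameLe (f f' : AFrame A) : Prop :=
  f.1 = f'.1 ∧ f.2.1 = f'.2.1 ∧ envLe f.2.2 f'.2.2

/-- Order on abstract continuations: elementwise on equal-length lists. -/
def kontLe (κ κ' : AKont A) : Prop := List.Forall₂ frameLe κ κ'

/-- Order on abstract configurations: componentwise, with equal expressions. -/
def confLe (c c' : AConf A) : Prop :=
  c.1 = c'.1 ∧ envLe c.2.1 c'.2.1 ∧ storeLe c.2.2.1 c'.2.2.1 ∧
    kontLe c.2.2.2 c'.2.2.2

/-- Abstract atomic-expression evaluation. -/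
def aAEval (a : Atomq) (ρ : AEnv A) (σ : AStore A) : Set (AClo A) :=
  match a with
  | Atomq.lam v e => {((v, e), ρ)}
  | Atomq.var v => {c | ∃ addr, ρ v = some addr ∧ c ∈ σ addr}

/-- Join a single-entry store `[addr ↦ S]` into `σ`. -/
def storeJoin (σ : AStore A) (addr : A) (S : Set (AClo A)) : AStore A :=
  fun a => σ a ∪ {c | a = addr ∧ c ∈ S}

/-- The abstracted CESK machine for ANF, parameterized by the abstract
allocation function. Tail calls leave the continuation unchanged, non-tail
calls push a frame, and returns pop a frame. -/
inductive AStep (aalloc : Var → AConf A → A) : AConf A → AConf A → Prop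
  | tail {f a ρ σ κ v e ρ' addr} :
      ((v, e), ρ') ∈ aAEval f ρ σ →
      addr = aalloc v (Exp.callE (Callq.app f a), ρ, σ, κ) →
      AStep aalloc (Exp.callE (Callq.app f a), ρ, σ, κ)
        (e, Function.update ρ' v (some addr), storeJoin σ addr (aAEval a ρ σ), κ)
  | push {v c e ρ σ κ} :
      AStep aalloc (Exp.letE v c e, ρ, σ, κ)
        (Exp.callE c, ρ, σ, (v, e, ρ) :: κ)
  | ret {x ρ σ v e ρ' κ addr} :
      addr = aalloc v (Exp.atomE x, ρ, σ, (v, e, ρ') :: κ) →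
      AStep aalloc (Exp.atomE x, ρ, σ, (v, e, ρ') :: κ)
        (e, Function.update ρ' v (some addr), storeJoin σ addr (aAEval x ρ σ), κ)

/-- Stack actions over a stack alphabet `Γ`: no change, push, or pop. -/
inductive SAct (Γ : Type) : Type
  | eps : SAct Γ
  | push : Γ → SAct Γ
  | pop : Γ → SAct Γ
  deriving DecidableEq

/-- Labeled one-step transition on configurations of a pushdown system with
transition relation `δ`. -/
def PStep {Q Γ : Type} (δ : Q → SAct Γ → Q → Prop) :
    Q × List Γ → SAct Γ → Q × List Γ → Prop :=
  fun c g c' =>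
    match g with
    | SAct.eps => δ c.1 SAct.eps c'.1 ∧ c'.2 = c.2
    | SAct.push γ => δ c.1 (SAct.push γ) c'.1 ∧ c'.2 = γ :: c.2
    | SAct.pop γ => δ c.1 (SAct.pop γ) c'.1 ∧ c.2 = γ :: c'.2

/-- Multi-step transition labeled by a string of stack actions. -/
inductive Steps {Q Γ : Type} (δ : Q → SAct Γ → Q → Prop) :
    Q × List Γ → List (SAct Γ) → Q × List Γ → Prop
  | refl (c) : Steps δ c [] c
  | step {c g c' w c''} : PStep δ c g c' → Steps δ c' w c'' → Steps δ c (g :: w) c''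

/-- Control states of the induced pushdown system: expression, environment and
store (the continuation is factored out). -/
abbrev CState (A : Type) : Type := Exp × AEnv A × AStore A

/-- Reassemble a machine configuration from a control state and a continuation. -/
def cfg {A : Type} (q : CState A) (κ : AKont A) : AConf A :=
  (q.1, q.2.1, q.2.2, κ)

/-- The pushdown system induced by the abstracted CESK machine: edges are
machine transitions quantified over all continuations. -/
def inducedδ {A : Type} (aalloc : Var → AConf A → A) :
    CState A → SAct (AFrame A) → CState A → Prop := fun q g q' =>
  match g with
  | SAct.eps => ∀ κ, AStep aalloc (cfg q κ) (cfg q' κ)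
  | SAct.push φ => ∀ κ, AStep aalloc (cfg q κ) (cfg q' (φ :: κ))
  | SAct.pop φ => ∀ κ, AStep aalloc (cfg q (φ :: κ)) (cfg q' κ)

def KontBlind (aalloc : Var → AConf A → A) : Prop :=
  ∀ (v : Var) (e : Exp) (ρ : AEnv A) (σ : AStore A) (κ κ' : AKont A),
    aalloc v (e, ρ, σ, κ) = aalloc v (e, ρ, σ, κ')

section
variable {aalloc : Var → AConf A → A} {q q' : CState A} {κ κ' : AKont A}

-- A rule reads at most the top frame; the one other place the continuation enters is the
-- allocator, which `KontBlind` makes uniform.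
theorem AStep.tail_push_or_pop_uniform (halloc : KontBlind aalloc)
    (h : AStep aalloc (cfg q κ) (cfg q' κ')) :
    (κ' = κ ∧ ∀ κ₀, AStep aalloc (cfg q κ₀) (cfg q' κ₀)) ∨
    (∃ φ, κ' = φ :: κ ∧ ∀ κ₀, AStep aalloc (cfg q κ₀) (cfg q' (φ :: κ₀))) ∨
    (∃ φ, κ = φ :: κ' ∧ ∀ κ₀, AStep aalloc (cfg q (φ :: κ₀)) (cfg q' κ₀)) := by
  obtain ⟨e, ρ, σ⟩ := q
  obtain ⟨e', ρ', σ'⟩ := q'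
  cases h with
  | tail hmem haddr => exact .inl ⟨rfl, fun _ => .tail hmem (haddr.trans (halloc ..))⟩
  | push => exact .inr (.inl ⟨_, rfl, fun _ => .push⟩)
  | ret haddr => exact .inr (.inr ⟨_, rfl, fun _ => .ret (haddr.trans (halloc ..))⟩)

theorem AStep.exists_pstep_inducedδ (halloc : KontBlind aalloc)
    (h : AStep aalloc (cfg q κ) (cfg q' κ')) :
    ∃ g, PStep (inducedδ aalloc) (q, κ) g (q', κ') := by
  rcases h.tail_push_or_pop_uniform halloc with ⟨rfl, hall⟩ | ⟨φ, rfl, hall⟩ | ⟨φ, rfl, hall⟩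
  · exact ⟨.eps, hall, rfl⟩
  · exact ⟨.push φ, hall, rfl⟩
  · exact ⟨.pop φ, hall, rfl⟩

theorem AStep.of_pstep_inducedδ {g : SAct (AFrame A)}
    (h : PStep (inducedδ aalloc) (q, κ) g (q', κ')) : AStep aalloc (cfg q κ) (cfg q' κ') := by
  cases g with
  | eps => obtain ⟨hall, rfl⟩ := h; exact hall _
  | push φ => obtain ⟨hall, rfl⟩ := h; exact hall _
  | pop φ => obtain ⟨hall, rfl⟩ := h; exact hall _

end

/-- provided the abstract allocator does not inspect the
continuation, the one-step transition of the abstracted CESK machine depends on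
the continuation only through its top frame (pops) or not at all (tail calls
and pushes): every step is a tail, push or pop step that holds uniformly for
every continuation; consequently the machine is faithfully represented by the
induced pushdown system over control states `(e,ρ̂,σ̂)` with frames as stack
alphabet. -/
theorem cesk_induced_pds {A : Type} (aalloc : Var → AConf A → A)
    (halloc : ∀ (v : Var) (e : Exp) (ρ : AEnv A) (σ : AStore A)
      (κ κ' : AKont A), aalloc v (e, ρ, σ, κ) = aalloc v (e, ρ, σ, κ')) :
    (∀ (q q' : CState A) (κ κ' : AKont A),
      AStep aalloc (cfg q κ) (cfg q' κ') →
        (κ' = κ ∧ ∀ κ₀, AStep aalloc (cfg q κ₀) (cfg q' κ₀)) ∨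
        (∃ φ, κ' = φ :: κ ∧ ∀ κ₀, AStep aalloc (cfg q κ₀) (cfg q' (φ :: κ₀))) ∨
        (∃ φ, κ = φ :: κ' ∧ ∀ κ₀, AStep aalloc (cfg q (φ :: κ₀)) (cfg q' κ₀))) ∧
    (∀ (q q' : CState A) (κ κ' : AKont A),
      AStep aalloc (cfg q κ) (cfg q' κ') ↔
        ∃ g, PStep (inducedδ aalloc) (q, κ) g (q', κ')) :=
  ⟨fun _ _ _ _ h => h.tail_push_or_pop_uniform halloc,
    fun _ _ _ _ => ⟨(·.exists_pstep_inducedδ halloc), fun ⟨_, h⟩ => .of_pstep_inducedδ h⟩⟩
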